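/- Every global K-graph is a weakly connected, asemicyclic and W-E-functional oriented graph that has an inner vertex. -/

import Mathlib

namespace PluralCuts

/-- The two horizontal directions: west and east. -/
inductive XDir : Type
  | W
  | E
deriving DecidableEq

/-- The two vertical directions: north and south. -/
inductive YDir : Type
  | N
  | S
deriving DecidableEq

/-- The other element of `{W, E}`. -/
def XDir.other : XDir → XDir
  | .W => .E
  | .E => .W

/-- A helper choosing between two values according to an `XDir`. -/
def pick {α : Type*} (w e : α) : XDir → α
  | .W => w
  | .E => e

/-- A digraph on (a finite set of) natural-number vertices: a finite set of
vertices together with a finite set of edges (ordered pairs). -/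
structure DG : Type where
  verts : Finset ℕ
  edges : Finset (ℕ × ℕ)

namespace DG

/-- `D` is an oriented graph: edges lie between vertices, the edge relation is
irreflexive and antisymmetric, and the vertex set is nonempty. -/
def IsOriented (D : DG) : Prop :=
  (∀ e ∈ D.edges, e.1 ∈ D.verts ∧ e.2 ∈ D.verts) ∧
  (∀ e ∈ D.edges, e.1 ≠ e.2) ∧
  (∀ a b : ℕ, (a, b) ∈ D.edges → (b, a) ∉ D.edges) ∧
  D.verts.Nonempty

/-- A `W`-vertex: no edge ends in it. -/
def isWVert (D : DG) (a : ℕ) : Prop := a ∈ D.verts ∧ ∀ b, (b, a) ∉ D.edges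

/-- An `E`-vertex: no edge begins in it. -/
def isEVert (D : DG) (a : ℕ) : Prop := a ∈ D.verts ∧ ∀ b, (a, b) ∉ D.edges

/-- An inner vertex: some edge ends in it and some edge begins in it. -/
def isInner (D : DG) (a : ℕ) : Prop :=
  a ∈ D.verts ∧ (∃ b, (b, a) ∈ D.edges) ∧ (∃ b, (a, b) ∈ D.edges)

/-- A `W`-edge: an edge beginning in a `W`-vertex. -/
def isWEdge (D : DG) (e : ℕ × ℕ) : Prop := e ∈ D.edges ∧ D.isWVert e.1

/-- An `E`-edge: an edge ending in an `E`-vertex. -/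
def isEEdge (D : DG) (e : ℕ × ℕ) : Prop := e ∈ D.edges ∧ D.isEVert e.2

/-- An `X`-edge, for `X ∈ {W, E}`. -/
def isXEdge (D : DG) : XDir → (ℕ × ℕ) → Prop
  | .W => D.isWEdge
  | .E => D.isEEdge

/-- An inner edge: it begins and ends in inner vertices. -/
def isInnerEdge (D : DG) (e : ℕ × ℕ) : Prop :=
  e ∈ D.edges ∧ D.isInner e.1 ∧ D.isInner e.2

/-- A functional `W`-edge `(a,b)`: `(a,c) ∈ D` implies `b = c`. -/
def funcWEdge (D : DG) (e : ℕ × ℕ) : Prop :=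
  D.isWEdge e ∧ ∀ c, (e.1, c) ∈ D.edges → c = e.2

/-- A functional `E`-edge `(b,a)`: `(c,a) ∈ D` implies `b = c`. -/
def funcEEdge (D : DG) (e : ℕ × ℕ) : Prop :=
  D.isEEdge e ∧ ∀ c, (c, e.2) ∈ D.edges → c = e.1

/-- `D` is `W`-`E`-functional: all its `W`-edges and `E`-edges are functional. -/
def WEFunctional (D : DG) : Prop :=
  (∀ e, D.isWEdge e → D.funcWEdge e) ∧ (∀ e, D.isEEdge e → D.funcEEdge e)

/-- Semi-adjacency: `(a,b)` or `(b,a)` is an edge. -/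
def semiAdj (D : DG) (a b : ℕ) : Prop := (a, b) ∈ D.edges ∨ (b, a) ∈ D.edges

/-- A semipath: a nonempty sequence of mutually distinct vertices in which any
two consecutive vertices are semi-adjacent. -/
def IsSemipath (D : DG) (l : List ℕ) : Prop :=
  l ≠ [] ∧ (∀ a ∈ l, a ∈ D.verts) ∧ l.Nodup ∧ l.Chain' D.semiAdj

/-- A path: a nonempty sequence of mutually distinct vertices in which
`(a_i, a_{i+1})` is an edge for consecutive vertices. -/
def IsPath (D : DG) (l : List ℕ) : Prop :=
  l ≠ [] ∧ (∀ a ∈ l, a ∈ D.verts) ∧ l.Nodup ∧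
    l.Chain' (fun a b => (a, b) ∈ D.edges)

/-- A semicycle: a sequence `a_1, ..., a_n` of vertices with `n ≥ 4`,
`a_1 = a_n`, `a_1, ..., a_{n-1}` mutually distinct, and consecutive vertices
semi-adjacent. -/
def IsSemicycle (D : DG) (l : List ℕ) : Prop :=
  4 ≤ l.length ∧ (∀ a ∈ l, a ∈ D.verts) ∧ l.head? = l.getLast? ∧
  l.dropLast.Nodup ∧ l.Chain' D.semiAdj

/-- `D` is weakly connected: every two vertices are joined by a semipath. -/
def WeaklyConnected (D : DG) : Prop :=
  ∀ a ∈ D.verts, ∀ b ∈ D.verts,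
    ∃ l, D.IsSemipath l ∧ l.head? = some a ∧ l.getLast? = some b

/-- `D` is asemicyclic: it has no semicycles. -/
def Asemicyclic (D : DG) : Prop := ∀ l, ¬ D.IsSemicycle l

/-- The cut `D_W[e_W - e_E]D_E`:
`(D_W - {e_W}) ∪ (D_E - {e_E}) ∪ {(e_W.1, e_E.2)}` on the union of the vertex
sets with `e_W.2` and `e_E.1` omitted. -/
def cut (DW DE : DG) (eW eE : ℕ × ℕ) : DG where
  verts := (DW.verts ∪ DE.verts) \ {eW.2, eE.1}
  edges := insert (eW.1, eE.2) ((DW.edges.erase eW) ∪ (DE.edges.erase eE))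

end DG

/-- The type of assignments of four distinguished edges `NW, SW, NE, SE`. -/
abbrev DistE : Type := YDir → XDir → ℕ × ℕ

/-- The type of labellings assigning to (inner) vertices four edges. -/
abbrev Lab : Type := ℕ → YDir → XDir → ℕ × ℕ

/-- `⟨D, ε⟩` is a basic K-graph: `D` is an oriented graph with a single inner
vertex `b`, all edges begin or end in `b`, every other vertex is joined to `b`
by an edge, there is at least one edge ending in `b` and one beginning in `b`,
the distinguished edges `ε Y W` end in `b` and `ε Y E` begin in `b`, and
(XYB): if there are at least two `X`-edges then `NX ≠ SX`. -/
def IsBasicK (D : DG) (ε : DistE) : Prop :=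
  D.IsOriented ∧
  ∃ b ∈ D.verts,
    (∀ e ∈ D.edges, e.1 = b ∨ e.2 = b) ∧
    (∀ v ∈ D.verts, v = b ∨ (v, b) ∈ D.edges ∨ (b, v) ∈ D.edges) ∧
    (∃ a, (a, b) ∈ D.edges) ∧ (∃ c, (b, c) ∈ D.edges) ∧
    (∀ Y : YDir, ε Y XDir.W ∈ D.edges ∧ (ε Y XDir.W).2 = b ∧
      ε Y XDir.E ∈ D.edges ∧ (ε Y XDir.E).1 = b) ∧
    (2 ≤ (D.edges.filter (fun e => e.2 = b)).card →
      ε YDir.N XDir.W ≠ ε YDir.S XDir.W) ∧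
    (2 ≤ (D.edges.filter (fun e => e.1 = b)).card →
      ε YDir.N XDir.E ≠ ε YDir.S XDir.E)

/-- `⟨D, ε⟩` is a basic Q-graph: as a basic K-graph but with no requirement
(XYB) on the distinguished edges. -/
def IsBasicQ (D : DG) (ε : DistE) : Prop :=
  D.IsOriented ∧
  ∃ b ∈ D.verts,
    (∀ e ∈ D.edges, e.1 = b ∨ e.2 = b) ∧
    (∀ v ∈ D.verts, v = b ∨ (v, b) ∈ D.edges ∨ (b, v) ∈ D.edges) ∧
    (∃ a, (a, b) ∈ D.edges) ∧ (∃ c, (b, c) ∈ D.edges) ∧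
    (∀ Y : YDir, ε Y XDir.W ∈ D.edges ∧ (ε Y XDir.W).2 = b ∧
      ε Y XDir.E ∈ D.edges ∧ (ε Y XDir.E).1 = b)

/-- Finite binary trees whose nodes carry an oriented graph, four
distinguished edges, and (at internal nodes) the two cut edges. -/
inductive CTree : Type
  | leaf (D : DG) (ε : DistE)
  | node (D : DG) (ε : DistE) (eW eE : ℕ × ℕ) (l r : CTree)

namespace CTree

/-- The graph at the root of the tree. -/
def rootGraph : CTree → DG
  | .leaf D _ => D
  | .node D _ _ _ _ _ => D

/-- The distinguished edges at the root of the tree. -/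
def dist : CTree → DistE
  | .leaf _ ε => ε
  | .node _ ε _ _ _ _ => ε

/-- The list of graphs-with-distinguished-edges at the leaves of the tree
(the basic K-graphs determining the leaves of a construction). -/
def leaves : CTree → List (DG × DistE)
  | .leaf D ε => [(D, ε)]
  | .node _ _ _ _ l r => l.leaves ++ r.leaves

end CTree

/-- The tree `G_W[e_W - e_E]G_E`, whose root graph is the cut of the root
graphs and whose distinguished edges are given by (XYD). -/
def mkNode (GW GE : CTree) (eW eE : ℕ × ℕ) : CTree :=
  .node (DG.cut GW.rootGraph GE.rootGraph eW eE)
    (fun Y X =>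
      match X with
      | .W => if eE = GE.dist Y XDir.W then GW.dist Y XDir.W else GE.dist Y XDir.W
      | .E => if eW = GW.dist Y XDir.E then GE.dist Y XDir.E else GW.dist Y XDir.E)
    eW eE GW GE

/-- The inductive notion of construction (of a global K-graph). -/
inductive IsConstruction : CTree → Prop
  | leaf (D : DG) (ε : DistE) (h : IsBasicK D ε) : IsConstruction (.leaf D ε)
  | node (D : DG) (ε : DistE) (eW eE : ℕ × ℕ) (GW GE : CTree)
      (hW : IsConstruction GW) (hE : IsConstruction GE)
      (hdisj : Disjoint GW.rootGraph.verts GE.rootGraph.verts)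
      (heW : GW.rootGraph.funcEEdge eW)
      (heE : GE.rootGraph.funcWEdge eE)
      (hD : D = DG.cut GW.rootGraph GE.rootGraph eW eE)
      (hXYC : ∀ Y : YDir, eW = GW.dist Y XDir.E ∨ eE = GE.dist Y XDir.W)
      (hεW : ∀ Y : YDir, ε Y XDir.W =
        if eE = GE.dist Y XDir.W then GW.dist Y XDir.W else GE.dist Y XDir.W)
      (hεE : ∀ Y : YDir, ε Y XDir.E =
        if eW = GW.dist Y XDir.E then GE.dist Y XDir.E else GW.dist Y XDir.E) :
      IsConstruction (.node D ε eW eE GW GE)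

/-- The inductive notion of construction of a global Q-graph: as
`IsConstruction` but with basic Q-graphs at the leaves. -/
inductive IsConstructionQ : CTree → Prop
  | leaf (D : DG) (ε : DistE) (h : IsBasicQ D ε) : IsConstructionQ (.leaf D ε)
  | node (D : DG) (ε : DistE) (eW eE : ℕ × ℕ) (GW GE : CTree)
      (hW : IsConstructionQ GW) (hE : IsConstructionQ GE)
      (hdisj : Disjoint GW.rootGraph.verts GE.rootGraph.verts)
      (heW : GW.rootGraph.funcEEdge eW)
      (heE : GE.rootGraph.funcWEdge eE)
      (hD : D = DG.cut GW.rootGraph GE.rootGraph eW eE)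
      (hXYC : ∀ Y : YDir, eW = GW.dist Y XDir.E ∨ eE = GE.dist Y XDir.W)
      (hεW : ∀ Y : YDir, ε Y XDir.W =
        if eE = GE.dist Y XDir.W then GW.dist Y XDir.W else GE.dist Y XDir.W)
      (hεE : ∀ Y : YDir, ε Y XDir.E =
        if eW = GW.dist Y XDir.E then GE.dist Y XDir.E else GW.dist Y XDir.E) :
      IsConstructionQ (.node D ε eW eE GW GE)

/-- ρ-equivalence of constructions: the least equivalence relation containing
ρ1, ρ2, ρ3 and closed under congruence with respect to cuts. -/
inductive RhoEquiv : CTree → CTree → Prop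
  | rho1 (P Q R : CTree) (eW eE fW fE : ℕ × ℕ)
      (hP : IsConstruction P) (hQ : IsConstruction Q) (hR : IsConstruction R)
      (heW : P.rootGraph.isEEdge eW) (hfW : Q.rootGraph.isEEdge fW)
      (heE : Q.rootGraph.isWEdge eE) (hfE : R.rootGraph.isWEdge fE)
      (h1 : IsConstruction (mkNode (mkNode P Q eW eE) R fW fE))
      (h2 : IsConstruction (mkNode P (mkNode Q R fW fE) eW eE)) :
      RhoEquiv (mkNode (mkNode P Q eW eE) R fW fE)
               (mkNode P (mkNode Q R fW fE) eW eE)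
  | rho2 (P Q R : CTree) (eW eE fW fE : ℕ × ℕ)
      (hP : IsConstruction P) (hQ : IsConstruction Q) (hR : IsConstruction R)
      (heW : P.rootGraph.isEEdge eW) (hfW : P.rootGraph.isEEdge fW)
      (hne : eW ≠ fW)
      (heE : Q.rootGraph.isWEdge eE) (hfE : R.rootGraph.isWEdge fE)
      (h1 : IsConstruction (mkNode (mkNode P Q eW eE) R fW fE))
      (h2 : IsConstruction (mkNode (mkNode P R fW fE) Q eW eE)) :
      RhoEquiv (mkNode (mkNode P Q eW eE) R fW fE)
               (mkNode (mkNode P R fW fE) Q eW eE)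
  | rho3 (P Q R : CTree) (eW eE fW fE : ℕ × ℕ)
      (hP : IsConstruction P) (hQ : IsConstruction Q) (hR : IsConstruction R)
      (heE : P.rootGraph.isWEdge eE) (hfE : P.rootGraph.isWEdge fE)
      (hne : eE ≠ fE)
      (heW : Q.rootGraph.isEEdge eW) (hfW : R.rootGraph.isEEdge fW)
      (h1 : IsConstruction (mkNode R (mkNode Q P eW eE) fW fE))
      (h2 : IsConstruction (mkNode Q (mkNode R P fW fE) eW eE)) :
      RhoEquiv (mkNode R (mkNode Q P eW eE) fW fE)
               (mkNode Q (mkNode R P fW fE) eW eE)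
  | congr (G1 G2 H1 H2 : CTree) (eW eE : ℕ × ℕ)
      (h12 : RhoEquiv G1 G2) (h34 : RhoEquiv H1 H2)
      (hc1 : IsConstruction (mkNode G1 H1 eW eE))
      (hc2 : IsConstruction (mkNode G2 H2 eW eE)) :
      RhoEquiv (mkNode G1 H1 eW eE) (mkNode G2 H2 eW eE)
  | refl (G : CTree) (h : IsConstruction G) : RhoEquiv G G
  | symm {G H : CTree} (h : RhoEquiv G H) : RhoEquiv H G
  | trans {G H K : CTree} (h1 : RhoEquiv G H) (h2 : RhoEquiv H K) :
      RhoEquiv G K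

/-- The class `[G]`: all constructions with the same root graph as `G` whose
leaves are determined by the same basic K-graphs as those of `G`. -/
def classOf (G : CTree) : Set CTree :=
  {H | IsConstruction H ∧ H.rootGraph = G.rootGraph ∧
    ∀ p : DG × DistE, p ∈ H.leaves ↔ p ∈ G.leaves}

/-- Renaming the vertices of a digraph along a function. -/
def DG.rename (f : ℕ → ℕ) (D : DG) : DG where
  verts := D.verts.image f
  edges := D.edges.image (fun e => (f e.1, f e.2))

/-- Renaming the vertices throughout a tree. -/
def CTree.rename (f : ℕ → ℕ) : CTree → CTree
  | .leaf D ε => .leaf (DG.rename f D) (fun Y X => (f (ε Y X).1, f (ε Y X).2))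
  | .node D ε eW eE l r =>
      .node (DG.rename f D) (fun Y X => (f (ε Y X).1, f (ε Y X).2))
        (f eW.1, f eW.2) (f eE.1, f eE.2) (l.rename f) (r.rename f)

/-- σ-equivalence: `H` is obtained from `G` by a bijective renaming of
vertices that fixes the root vertices (so only secondary vertices may be
renamed). -/
def SigmaEquiv (G H : CTree) : Prop :=
  ∃ f : ℕ ≃ ℕ, (∀ v ∈ G.rootGraph.verts, f v = v) ∧ H = G.rename f

/-- The global compass graph `‖G‖`: all constructions σ-equivalent to a
construction in `[G]`. -/
def normClass (G : CTree) : Set CTree :=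
  {H | ∃ K ∈ classOf G, SigmaEquiv K H}

/-- The labelling `L` of `λ(G) = ⟨D, L⟩`, defined by induction on `G`: at a
leaf given by a basic K-graph with inner vertex `b`, `YX(b) = YX(B)`; at a
node, the value is inherited from the appropriate subtree unless it is one of
the two cut edges, in which case it is the new edge introduced by the cut. -/
def lamG : CTree → Lab
  | .leaf _ ε => fun _ => ε
  | .node _ _ eW eE l r => fun a Y X =>
      let v := if a ∈ l.rootGraph.verts then lamG l a Y X else lamG r a Y X
      if v = eW ∨ v = eE then (eW.1, eE.2) else v

/-- `L` assigns to every inner vertex `a` edges `L a Y W` ending in `a` and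
edges `L a Y E` beginning in `a`. -/
def ProperLab (D : DG) (L : Lab) : Prop :=
  ∀ a, D.isInner a → ∀ Y : YDir,
    L a Y XDir.W ∈ D.edges ∧ (L a Y XDir.W).2 = a ∧
    L a Y XDir.E ∈ D.edges ∧ (L a Y XDir.E).1 = a

/-- `⟨D, L⟩` separates `N` from `S`. -/
def SeparatesNS (D : DG) (L : Lab) : Prop :=
  ∀ a, D.isInner a →
    (2 ≤ (D.edges.filter (fun e => e.2 = a)).card →
      L a YDir.N XDir.W ≠ L a YDir.S XDir.W) ∧
    (2 ≤ (D.edges.filter (fun e => e.1 = a)).card →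
      L a YDir.N XDir.E ≠ L a YDir.S XDir.E)

/-- A list `a_1, ..., a_n` is `Y`-decent in `⟨D, L⟩`: `n = 1`, or
`YE(a_1) = (a_1, a_2)`, or `YW(a_n) = (a_{n-1}, a_n)`. -/
def Ydecent (L : Lab) (Y : YDir) (l : List ℕ) : Prop :=
  ∀ a b t, l = a :: b :: t →
    (L a Y XDir.E = (a, b) ∨
      ∃ c d t', l.reverse = d :: c :: t' ∧ L d Y XDir.W = (c, d))

/-- `⟨D, L⟩` is a local compass graph. -/
def IsLocalCompass (D : DG) (L : Lab) : Prop :=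
  D.IsOriented ∧ ProperLab D L ∧
  D.WeaklyConnected ∧ D.Asemicyclic ∧ D.WEFunctional ∧ (∃ a, D.isInner a) ∧
  SeparatesNS D L ∧
  (∀ l, D.IsPath l → Ydecent L YDir.N l ∧ Ydecent L YDir.S l)

/-- A path (list) covers an edge `g` when `g` is a pair of consecutive
vertices of the list. -/
def covers (l : List ℕ) (g : ℕ × ℕ) : Prop := g ∈ l.zip l.tail

/-- A `YX`-edge in `⟨D, L⟩`. -/
def YXedge (D : DG) (L : Lab) (Y : YDir) : XDir → (ℕ × ℕ) → Prop
  | .W, g => g ∈ D.edges ∧ (L g.2 Y XDir.W = g ∨ D.isEEdge g)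
  | .E, g => g ∈ D.edges ∧ (L g.1 Y XDir.E = g ∨ D.isWEdge g)

/-- A proper semipath: a semipath such that neither it nor its reverse is a
path. -/
def ProperSemipath (D : DG) (l : List ℕ) : Prop :=
  D.IsSemipath l ∧ ¬ D.IsPath l ∧ ¬ D.IsPath l.reverse

/-- A transversal edge `(a,b)`: there is a proper semipath beginning with
`a, b` and a proper semipath beginning with `b, a`. -/
def Transversal (D : DG) (e : ℕ × ℕ) : Prop :=
  e ∈ D.edges ∧
  (∃ t, ProperSemipath D (e.1 :: e.2 :: t)) ∧
  (∃ t, ProperSemipath D (e.2 :: e.1 :: t))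

/-- The edge of `D` that connects two semi-adjacent vertices `a` and `b`. -/
def connEdge (D : DG) (a b : ℕ) : ℕ × ℕ :=
  if (a, b) ∈ D.edges then (a, b) else (b, a)

/-- The connecting edges of a list: the edges connecting its consecutive
vertices. -/
def connEdges (D : DG) (l : List ℕ) (e : ℕ × ℕ) : Prop :=
  ∃ p ∈ l.zip l.tail, e = connEdge D p.1 p.2

/-- A bifurcation: three distinct edges with a common vertex. -/
def Bifurcation (D : DG) (e1 e2 e3 : ℕ × ℕ) : Prop :=
  e1 ∈ D.edges ∧ e2 ∈ D.edges ∧ e3 ∈ D.edges ∧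
  e1 ≠ e2 ∧ e1 ≠ e3 ∧ e2 ≠ e3 ∧
  ∃ v, (v = e1.1 ∨ v = e1.2) ∧ (v = e2.1 ∨ v = e2.2) ∧ (v = e3.1 ∨ v = e3.2)

/-- A K-graph: a weakly connected, asemicyclic, `W`-`E`-functional oriented
graph with an inner vertex in which no bifurcation is transversal. -/
def IsKGraph (D : DG) : Prop :=
  D.IsOriented ∧ D.WeaklyConnected ∧ D.Asemicyclic ∧ D.WEFunctional ∧
  (∃ a, D.isInner a) ∧
  ∀ e1 e2 e3, Bifurcation D e1 e2 e3 →
    ¬ (Transversal D e1 ∧ Transversal D e2 ∧ Transversal D e3)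

/-- A Q-graph: a weakly connected, asemicyclic, `W`-`E`-functional oriented
graph with an inner vertex. -/
def IsQGraph (D : DG) : Prop :=
  D.IsOriented ∧ D.WeaklyConnected ∧ D.Asemicyclic ∧ D.WEFunctional ∧
  ∃ a, D.isInner a

end PluralCuts

/-! A global K-graph is assembled from basic K-graphs, which are stars around their inner
vertex, by cuts; so it suffices that stars have the five properties and that cuts preserve them.
In a cut `D_W[(a,b)-(c,d)]D_E` the removed vertices `b` and `c` are pendant, with only neighbours
`a` and `d`, so deleting them keeps each side connected, and the new edge `(a,d)` joins the two
sides. It is the only edge between them, and a bridge lies on no semicycle, so a semicycle of the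
cut stays on one side and is a semicycle of `D_W` or of `D_E`. Functionality is checked at each
source and sink: away from `a` and `d` its neighbourhood is the one it has in `D_W` or `D_E`. -/

namespace Cycle

variable {α : Type*}

theorem exists_eq_cons_of_mem {s : Cycle α} {a : α} (h : a ∈ s) :
    ∃ l : List α, s = ↑(a :: l) := by
  induction s using Quotient.inductionOn' with
  | h l =>
    obtain ⟨l₁, l₂, rfl⟩ := List.append_of_mem (mem_coe_iff.mp h)
    exact ⟨l₂ ++ l₁, coe_eq_coe.mpr List.isRotated_append⟩

theorem Chain.imp_of_mem {r r' : α → α → Prop} {s : Cycle α}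
    (H : ∀ a ∈ s, ∀ b ∈ s, r a b → r' a b) (h : s.Chain r) : s.Chain r' := by
  induction s with
  | nil => exact Chain.nil r'
  | cons a l _ =>
    have hmem : ∀ x ∈ a :: (l ++ [a]), x ∈ (↑(a :: l) : Cycle α) := by
      intro x hx
      rw [mem_coe_iff]
      grind
    exact List.IsChain.imp_of_mem_imp (fun x y hx hy => H x (hmem x hx) y (hmem y hy)) h

theorem not_chain_of_star {r : α → α → Prop} {b : α}
    (hb : ∀ x y, r x y → x = b ∨ y = b) {s : Cycle α} (hs : s.Nodup)
    (hlen : 3 ≤ s.length) : ¬ s.Chain r := by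
  intro hc
  by_cases hbs : b ∈ s
  · obtain ⟨t, rfl⟩ := exists_eq_cons_of_mem hbs
    obtain _ | ⟨w, _ | ⟨u, t⟩⟩ := t
    iterate 2 simp at hlen
    rw [nodup_coe_iff] at hs
    simp only [List.nodup_cons, List.mem_cons] at hs
    rcases hb w u (List.isChain_cons_cons.mp (List.isChain_cons_cons.mp hc).2).1 with rfl | rfl
      <;> tauto
  · induction s with
    | nil => simp at hlen
    | cons a l _ =>
      obtain _ | ⟨w, l⟩ := l
      · simp at hlen
      rcases hb a w (List.isChain_cons_cons.mp hc).1 with rfl | rfl <;> simp at hbs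

end Cycle

section Bridge

variable {α β : Type*} {r : α → α → Prop} {f : α → β} {p q : α}

theorem List.IsChain.apply_eq_of_not_mem
    (hr : ∀ x y, r x y → f x ≠ f y → (x = p ∧ y = q) ∨ (x = q ∧ y = p))
    {x : α} {l : List α} (hc : (x :: l).IsChain r) (h : p ∉ x :: l ∨ q ∉ x :: l) :
    ∀ y ∈ l, f y = f x := by
  have hc' : (x :: l).IsChain fun y z => f y = f z :=
    hc.imp_of_mem_imp fun y z hy hz hyz => by
      by_contra hne
      rcases hr y z hyz hne with ⟨rfl, rfl⟩ | ⟨rfl, rfl⟩ <;> tauto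
  exact hc'.cons_induction (f · = f x) l (fun _ _ h1 h2 => h1 ▸ h2) rfl

theorem Cycle.Chain.apply_eq_of_bridge
    (hr : ∀ x y, r x y → f x ≠ f y → (x = p ∧ y = q) ∨ (x = q ∧ y = p))
    {s : Cycle α} (hs : s.Nodup) (hlen : 3 ≤ s.length) (hc : s.Chain r)
    (hp : p ∈ s) (hq : q ∈ s) : f p = f q := by
  obtain ⟨t, rfl⟩ := Cycle.exists_eq_cons_of_mem hp
  rw [Cycle.nodup_coe_iff] at hs
  rw [Cycle.length_coe] at hlen
  rw [Cycle.mem_coe_iff] at hq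
  rcases List.mem_cons.mp hq with rfl | hq
  · rfl
  obtain ⟨t₁, t₂, rfl⟩ := List.append_of_mem hq
  simp only [Cycle.chain_coe_cons, List.cons_append, List.append_assoc] at hc
  -- one of the two arcs of the cycle between `p` and `q` has an inner vertex `w`,
  -- and no step of that arc joins `p` and `q`
  have step : ∀ {x w}, r x w → ¬(x = p ∧ w = q) → ¬(x = q ∧ w = p) → f x = f w :=
    fun hxw h₁ h₂ => by_contra fun hne => (hr _ _ hxw hne).elim h₁ h₂
  cases t₁ with
  | cons w t₁ =>
    simp only [List.cons_append, List.nodup_cons, List.mem_cons, List.mem_append] at hs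
    have hpw : f p = f w := step (List.isChain_cons_cons.mp hc).1 (by grind) (by grind)
    have hchain : (w :: (t₁ ++ [q])).IsChain r :=
      hc.tail.prefix ⟨t₂ ++ [p], by simp⟩
    have hqw := hchain.apply_eq_of_not_mem hr (Or.inl (by grind)) q (by simp)
    rw [hpw, hqw]
  | nil =>
    obtain _ | ⟨w, t₂⟩ := t₂
    · simp at hlen
    simp only [List.nil_append, List.cons_append, List.nodup_cons, List.mem_cons] at hs hc
    have hqw : f q = f w := step (List.isChain_cons_cons.mp hc.tail).1 (by grind) (by grind)
    have hpw := hc.tail.tail.apply_eq_of_not_mem hr (Or.inr (by grind)) p (by simp)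
    rw [hpw, hqw]

theorem Cycle.Chain.forall_apply_eq_of_bridge
    (hr : ∀ x y, r x y → f x ≠ f y → (x = p ∧ y = q) ∨ (x = q ∧ y = p))
    {s : Cycle α} (hs : s.Nodup) (hlen : 3 ≤ s.length) (hc : s.Chain r) :
    ∀ x ∈ s, ∀ y ∈ s, f x = f y := by
  have hc' : s.Chain fun x y => f x = f y :=
    hc.imp_of_mem fun x hx y hy hxy => by_contra fun hne => by
      rcases hr x y hxy hne with ⟨rfl, rfl⟩ | ⟨rfl, rfl⟩
      · exact hne (hc.apply_eq_of_bridge hr hs hlen hx hy)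
      · exact hne (hc.apply_eq_of_bridge hr hs hlen hy hx).symm
  have : IsTrans α fun x y => f x = f y := ⟨fun _ _ _ => Eq.trans⟩
  exact Cycle.chain_iff_pairwise.mp hc'

end Bridge

namespace Relation.ReflTransGen

variable {α : Type*} {r : α → α → Prop}

theorem avoid_pendant {p q v : α} (hp : ∀ x, r p x → x = q) (h : ReflTransGen r q v)
    (hv : v ≠ p) : ReflTransGen (fun x y => r x y ∧ x ≠ p ∧ y ≠ p) q v := by
  induction h with
  | refl => rfl
  | @tail w v _ hwv ih =>
    by_cases hw : w = p
    · subst hw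
      rw [hp v hwv]
    · exact (ih hw).tail ⟨hwv, hw, hv⟩

theorem exists_nodup_isChain {a b : α} (h : ReflTransGen r a b) :
    ∃ l : List α, l.Nodup ∧ l.IsChain r ∧ l.head? = some a ∧ l.getLast? = some b := by
  induction h using Relation.ReflTransGen.head_induction_on with
  | refl => exact ⟨[b], List.nodup_singleton b, .singleton b, rfl, rfl⟩
  | @head a c hac _ ih =>
    obtain ⟨l, hnd, hc, hhead, hlast⟩ := ih
    by_cases ha : a ∈ l
    · obtain ⟨l₁, l₂, rfl⟩ := List.append_of_mem ha
      refine ⟨a :: l₂, hnd.sublist (List.sublist_append_right _ _),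
        hc.suffix (List.suffix_append _ _), rfl, ?_⟩
      rwa [List.getLast?_append_of_ne_nil _ (List.cons_ne_nil a l₂)] at hlast
    · refine ⟨a :: l, List.nodup_cons.mpr ⟨ha, hnd⟩, hc.cons (by simp [hhead, hac]), rfl,
        ?_⟩
      rw [List.getLast?_cons, hlast]
      rfl

end Relation.ReflTransGen

namespace PluralCuts

namespace DG

variable {D : DG}

theorem reflTransGen_semiAdj_symm {x y : ℕ} (h : Relation.ReflTransGen D.semiAdj x y) :
    Relation.ReflTransGen D.semiAdj y x :=
  Relation.ReflTransGen.mono (fun _ _ => Or.symm) _ _ (Relation.reflTransGen_swap.mpr h)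

theorem IsOriented.mem_verts_of_semiAdj (hD : D.IsOriented) {x y : ℕ} (h : D.semiAdj x y) :
    x ∈ D.verts ∧ y ∈ D.verts := by
  rcases h with h | h
  exacts [hD.1 _ h, (hD.1 _ h).symm]

theorem WeaklyConnected.reflTransGen (hD : D.WeaklyConnected) {x y : ℕ} (hx : x ∈ D.verts)
    (hy : y ∈ D.verts) : Relation.ReflTransGen D.semiAdj x y := by
  obtain ⟨l, ⟨hne, -, -, hc⟩, hhead, hlast⟩ := hD x hx y hy
  rw [List.head?_eq_some_head hne, Option.some.injEq] at hhead
  rw [List.getLast?_eq_some_getLast hne, Option.some.injEq] at hlast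
  exact hhead ▸ hlast ▸ List.relationReflTransGen_of_exists_isChain l hc hne

theorem weaklyConnected_of_reflTransGen (hD : D.IsOriented) {a : ℕ}
    (h : ∀ v ∈ D.verts, Relation.ReflTransGen D.semiAdj a v) : D.WeaklyConnected := by
  intro x hx y hy
  obtain ⟨l, hnd, hc, hhead, hlast⟩ :=
    ((reflTransGen_semiAdj_symm (h x hx)).trans (h y hy)).exists_nodup_isChain
  have hne : l ≠ [] := by rintro rfl; simp at hhead
  have hverts : ∀ v ∈ l, v ∈ D.verts := by
    refine hc.induction _ _ (fun _ _ h _ => (hD.mem_verts_of_semiAdj h).2) fun _ => ?_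
    rw [List.head?_eq_some_head hne, Option.some.injEq] at hhead
    exact hhead ▸ hx
  exact ⟨l, ⟨hne, hverts, hnd, hc⟩, hhead, hlast⟩

theorem asemicyclic_iff (hD : D.IsOriented) :
    D.Asemicyclic ↔ ∀ s : Cycle ℕ, s.Nodup → 3 ≤ s.length → ¬ s.Chain D.semiAdj := by
  constructor
  · intro h s
    induction s with
    | nil => simp
    | cons a l _ => ?_
    intro hnd hlen hc
    rw [Cycle.nodup_coe_iff] at hnd
    rw [Cycle.length_coe] at hlen
    obtain _ | ⟨w, t⟩ := l
    · simp at hlen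
    have ha := (hD.mem_verts_of_semiAdj (List.isChain_cons_cons.mp hc).1).1
    refine h ((a :: w :: t) ++ [a]) ⟨by simp at hlen ⊢; omega, ?_,
      by rw [List.getLast?_concat]; rfl, by rwa [List.dropLast_concat], hc⟩
    exact hc.induction _ _ (fun _ _ h _ => (hD.mem_verts_of_semiAdj h).2) fun _ => ha
  · rintro h l ⟨hlen, -, hends, hnd, hc⟩
    obtain rfl | ⟨c, z, rfl⟩ := l.eq_nil_or_concat
    · simp at hlen
    obtain _ | ⟨a, t⟩ := c
    · simp at hlen
    rw [List.concat_eq_append] at hlen hnd hends hc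
    rw [List.getLast?_concat, List.cons_append, List.head?_cons, Option.some.injEq] at hends
    subst hends
    rw [List.dropLast_concat] at hnd
    exact h (a :: t) (Cycle.nodup_coe_iff.mpr hnd) (by simp at hlen ⊢; omega) hc

theorem weFunctional_iff : D.WEFunctional ↔
    (∀ x, D.isWVert x → ∀ y z, (x, y) ∈ D.edges → (x, z) ∈ D.edges → z = y) ∧
    (∀ x, D.isEVert x → ∀ y z, (y, x) ∈ D.edges → (z, x) ∈ D.edges → z = y) := by
  constructor
  · rintro ⟨hW, hE⟩
    exact ⟨fun x hx y z hy hz => (hW (x, y) ⟨hy, hx⟩).2 z hz,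
      fun x hx y z hy hz => (hE (y, x) ⟨hy, hx⟩).2 z hz⟩
  · rintro ⟨hW, hE⟩
    exact ⟨fun e he => ⟨he, fun z hz => hW e.1 he.2 e.2 z he.1 hz⟩,
      fun e he => ⟨he, fun z hz => hE e.2 he.2 e.1 z he.1 hz⟩⟩

section Star

variable {b : ℕ}

theorem asemicyclic_of_forall_edge (hD : D.IsOriented)
    (hstar : ∀ e ∈ D.edges, e.1 = b ∨ e.2 = b) : D.Asemicyclic := by
  refine (asemicyclic_iff hD).mpr fun s hs hlen => s.not_chain_of_star (b := b) ?_ hs hlen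
  rintro x y (hxy | hxy)
  exacts [hstar _ hxy, (hstar _ hxy).symm]

theorem weFunctional_of_forall_edge (hstar : ∀ e ∈ D.edges, e.1 = b ∨ e.2 = b)
    (hin : ∃ a, (a, b) ∈ D.edges) (hout : ∃ c, (b, c) ∈ D.edges) : D.WEFunctional := by
  refine weFunctional_iff.mpr ⟨fun x hx y z hy hz => ?_, fun x hx y z hy hz => ?_⟩
  · have hxb : x ≠ b := by
      rintro rfl
      obtain ⟨a, ha⟩ := hin
      exact hx.2 a ha
    exact ((hstar _ hz).resolve_left hxb).trans ((hstar _ hy).resolve_left hxb).symm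
  · have hxb : x ≠ b := by
      rintro rfl
      obtain ⟨c, hc⟩ := hout
      exact hx.2 c hc
    exact ((hstar _ hz).resolve_right hxb).trans ((hstar _ hy).resolve_right hxb).symm

end Star

structure Cuttable (DW DE : DG) (a b c d : ℕ) : Prop where
  orientedW : DW.IsOriented
  orientedE : DE.IsOriented
  disjoint : Disjoint DW.verts DE.verts
  funcEEdge : DW.funcEEdge (a, b)
  funcWEdge : DE.funcWEdge (c, d)

namespace Cuttable

variable {DW DE : DG} {a b c d : ℕ}

theorem a_mem (h : Cuttable DW DE a b c d) : a ∈ DW.verts :=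
  (h.orientedW.1 _ h.funcEEdge.1.1).1

theorem d_mem (h : Cuttable DW DE a b c d) : d ∈ DE.verts :=
  (h.orientedE.1 _ h.funcWEdge.1.1).2

theorem notMem_E_of_mem_W (h : Cuttable DW DE a b c d) {x : ℕ} (hx : x ∈ DW.verts) :
    x ∉ DE.verts :=
  Finset.disjoint_left.mp h.disjoint hx

theorem mem_cut_edges_iff (h : Cuttable DW DE a b c d) {x y : ℕ} :
    (x, y) ∈ (cut DW DE (a, b) (c, d)).edges ↔
      (x = a ∧ y = d) ∨ ((x, y) ∈ DW.edges ∧ y ≠ b) ∨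
        ((x, y) ∈ DE.edges ∧ x ≠ c) := by
  have hb : ∀ {x}, (x, b) ∈ DW.edges → x = a := h.funcEEdge.2 _
  have hc : ∀ {y}, (c, y) ∈ DE.edges → y = d := h.funcWEdge.2 _
  simp only [cut, Finset.mem_insert, Finset.mem_union, Finset.mem_erase, Prod.ext_iff]
  grind

theorem mem_cut_verts_iff (h : Cuttable DW DE a b c d) {x : ℕ} :
    x ∈ (cut DW DE (a, b) (c, d)).verts ↔
    (x ∈ DW.verts ∧ x ≠ b) ∨ (x ∈ DE.verts ∧ x ≠ c) := by
  have := h.notMem_E_of_mem_W (x := x)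
  have := h.funcEEdge.1.2.1
  have := h.funcWEdge.1.2.1
  simp only [cut, Finset.mem_sdiff, Finset.mem_union, Finset.mem_insert, Finset.mem_singleton]
  grind

theorem cut_edge_cases (h : Cuttable DW DE a b c d) {x y : ℕ}
    (hxy : (x, y) ∈ (cut DW DE (a, b) (c, d)).edges) :
    (x = a ∧ y = d) ∨ ((x, y) ∈ DW.edges ∧ x ≠ b ∧ y ≠ b) ∨
      ((x, y) ∈ DE.edges ∧ x ≠ c ∧ y ≠ c) := by
  rcases h.mem_cut_edges_iff.mp hxy with hb | ⟨he, hy⟩ | ⟨he, hx⟩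
  · exact Or.inl hb
  · refine Or.inr (Or.inl ⟨he, ?_, hy⟩)
    rintro rfl
    exact h.funcEEdge.1.2.2 y he
  · refine Or.inr (Or.inr ⟨he, hx, ?_⟩)
    rintro rfl
    exact h.funcWEdge.1.2.2 x he

theorem isOriented_cut (h : Cuttable DW DE a b c d) : (cut DW DE (a, b) (c, d)).IsOriented := by
  have ha := h.a_mem
  have hd := h.d_mem
  have hab : a ≠ b := h.orientedW.2.1 _ h.funcEEdge.1.1
  have hcd : c ≠ d := h.orientedE.2.1 _ h.funcWEdge.1.1
  have hWE := fun x => h.notMem_E_of_mem_W (x := x)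
  have hvW : ∀ x y, (x, y) ∈ DW.edges → x ∈ DW.verts ∧ y ∈ DW.verts :=
    fun x y => h.orientedW.1 (x, y)
  have hvE : ∀ x y, (x, y) ∈ DE.edges → x ∈ DE.verts ∧ y ∈ DE.verts :=
    fun x y => h.orientedE.1 (x, y)
  refine ⟨?_, ?_, ?_, ⟨a, h.mem_cut_verts_iff.mpr (Or.inl ⟨ha, hab⟩)⟩⟩
  · rintro ⟨x, y⟩ hxy
    simp only [h.mem_cut_verts_iff]
    rcases h.cut_edge_cases hxy with ⟨rfl, rfl⟩ | hW | hE <;> grind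
  · rintro ⟨x, y⟩ hxy
    rcases h.cut_edge_cases hxy with ⟨rfl, rfl⟩ | hW | hE
    · exact fun hxd : x = y => hWE x ha (hxd ▸ hd)
    · exact h.orientedW.2.1 _ hW.1
    · exact h.orientedE.2.1 _ hE.1
  · intro x y hxy hyx
    have := h.orientedW.2.2.1 x y
    have := h.orientedE.2.2.1 x y
    rcases h.cut_edge_cases hxy with hB | hW | hE <;>
      rcases h.cut_edge_cases hyx with hB' | hW' | hE' <;> grind

theorem mem_W_of_mem_cut (h : Cuttable DW DE a b c d) {x y : ℕ}
    (hxy : (x, y) ∈ (cut DW DE (a, b) (c, d)).edges) (hne : (x, y) ≠ (a, d))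
    (hW : x ∈ DW.verts ∨ y ∈ DW.verts) : (x, y) ∈ DW.edges := by
  rcases h.cut_edge_cases hxy with ⟨rfl, rfl⟩ | hW' | hE
  · exact absurd rfl hne
  · exact hW'.1
  · have := h.orientedE.1 _ hE.1
    have := h.notMem_E_of_mem_W (x := x)
    have := h.notMem_E_of_mem_W (x := y)
    grind

theorem mem_E_of_mem_cut (h : Cuttable DW DE a b c d) {x y : ℕ}
    (hxy : (x, y) ∈ (cut DW DE (a, b) (c, d)).edges) (hne : (x, y) ≠ (a, d))
    (hE : x ∈ DE.verts ∨ y ∈ DE.verts) : (x, y) ∈ DE.edges := by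
  rcases h.cut_edge_cases hxy with ⟨rfl, rfl⟩ | hW | hE'
  · exact absurd rfl hne
  · have := h.orientedW.1 _ hW.1
    have := h.notMem_E_of_mem_W (x := x)
    have := h.notMem_E_of_mem_W (x := y)
    grind
  · exact hE'.1

theorem semiAdj_cut_cases (h : Cuttable DW DE a b c d) {x y : ℕ}
    (hxy : (cut DW DE (a, b) (c, d)).semiAdj x y) :
    ((x = a ∧ y = d) ∨ (x = d ∧ y = a)) ∨ (DW.semiAdj x y ∧ x ≠ b ∧ y ≠ b) ∨
      (DE.semiAdj x y ∧ x ≠ c ∧ y ≠ c) := by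
  rcases hxy with hxy | hxy <;> rcases h.cut_edge_cases hxy with hB | hW | hE
  all_goals simp only [semiAdj]; tauto

theorem semiAdj_cut_of_W (h : Cuttable DW DE a b c d) {x y : ℕ} (hxy : DW.semiAdj x y)
    (hx : x ≠ b) (hy : y ≠ b) : (cut DW DE (a, b) (c, d)).semiAdj x y := by
  rcases hxy with hxy | hxy
  exacts [Or.inl (h.mem_cut_edges_iff.mpr (Or.inr (Or.inl ⟨hxy, hy⟩))),
    Or.inr (h.mem_cut_edges_iff.mpr (Or.inr (Or.inl ⟨hxy, hx⟩)))]

theorem semiAdj_cut_of_E (h : Cuttable DW DE a b c d) {x y : ℕ} (hxy : DE.semiAdj x y)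
    (hx : x ≠ c) (hy : y ≠ c) : (cut DW DE (a, b) (c, d)).semiAdj x y := by
  rcases hxy with hxy | hxy
  exacts [Or.inl (h.mem_cut_edges_iff.mpr (Or.inr (Or.inr ⟨hxy, hx⟩))),
    Or.inr (h.mem_cut_edges_iff.mpr (Or.inr (Or.inr ⟨hxy, hy⟩)))]

theorem weaklyConnected_cut (h : Cuttable DW DE a b c d) (hW : DW.WeaklyConnected)
    (hE : DE.WeaklyConnected) : (cut DW DE (a, b) (c, d)).WeaklyConnected := by
  have hb : ∀ x, DW.semiAdj b x → x = a := by
    rintro x (hx | hx)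
    exacts [absurd hx (h.funcEEdge.1.2.2 x), h.funcEEdge.2 x hx]
  have hc : ∀ x, DE.semiAdj c x → x = d := by
    rintro x (hx | hx)
    exacts [h.funcWEdge.2 x hx, absurd hx (h.funcWEdge.1.2.2 x)]
  refine weaklyConnected_of_reflTransGen h.isOriented_cut (a := a) fun v hv => ?_
  rcases h.mem_cut_verts_iff.mp hv with ⟨hvW, hvb⟩ | ⟨hvE, hvc⟩
  · exact Relation.ReflTransGen.mono (fun x y hxy => h.semiAdj_cut_of_W hxy.1 hxy.2.1 hxy.2.2)
      _ _ ((hW.reflTransGen h.a_mem hvW).avoid_pendant hb hvb)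
  · exact .head (Or.inl (h.mem_cut_edges_iff.mpr (Or.inl ⟨rfl, rfl⟩)))
      (Relation.ReflTransGen.mono (fun x y hxy => h.semiAdj_cut_of_E hxy.1 hxy.2.1 hxy.2.2)
        _ _ ((hE.reflTransGen h.d_mem hvE).avoid_pendant hc hvc))

theorem asemicyclic_cut (h : Cuttable DW DE a b c d) (hW : DW.Asemicyclic)
    (hE : DE.Asemicyclic) : (cut DW DE (a, b) (c, d)).Asemicyclic := by
  have ha := h.a_mem
  have hd := h.d_mem
  have hWE := fun x => h.notMem_E_of_mem_W (x := x)
  have hvW := fun x y (hxy : DW.semiAdj x y) => h.orientedW.mem_verts_of_semiAdj hxy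
  have hvE := fun x y (hxy : DE.semiAdj x y) => h.orientedE.mem_verts_of_semiAdj hxy
  rw [asemicyclic_iff h.isOriented_cut]
  intro s hnd hlen hc
  have hside : ∀ x ∈ s, ∀ y ∈ s, (x ∈ DW.verts) = (y ∈ DW.verts) := by
    refine hc.forall_apply_eq_of_bridge (p := a) (q := d) (fun x y hxy hne => ?_) hnd hlen
    rcases h.semiAdj_cut_cases hxy with hB | hW | hE
    · exact hB
    · grind
    · grind
  by_cases hall : ∀ x ∈ s, x ∈ DW.verts
  · refine (asemicyclic_iff h.orientedW).mp hW s hnd hlen (hc.imp_of_mem fun x hx y hy hxy => ?_)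
    have := hall x hx
    have := hall y hy
    rcases h.semiAdj_cut_cases hxy with hB | hW | hE <;> grind
  · obtain ⟨x₀, hx₀, hx₀W⟩ := not_forall₂.mp hall
    have hall : ∀ x ∈ s, x ∉ DW.verts := fun x hx => hside x hx x₀ hx₀ ▸ hx₀W
    refine (asemicyclic_iff h.orientedE).mp hE s hnd hlen (hc.imp_of_mem fun x hx y hy hxy => ?_)
    have := hall x hx
    have := hall y hy
    rcases h.semiAdj_cut_cases hxy with hB | hW | hE <;> grind

theorem out_eq_of_isWVert_cut (h : Cuttable DW DE a b c d) (hW : DW.WEFunctional)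
    (hE : DE.WEFunctional) {x y z : ℕ} (hx : (cut DW DE (a, b) (c, d)).isWVert x)
    (hy : (x, y) ∈ (cut DW DE (a, b) (c, d)).edges)
    (hz : (x, z) ∈ (cut DW DE (a, b) (c, d)).edges) : z = y := by
  obtain ⟨hx, hxin⟩ := hx
  rcases h.mem_cut_verts_iff.mp hx with ⟨hxW, hxb⟩ | ⟨hxE, hxc⟩
  · have hxW' : DW.isWVert x :=
      ⟨hxW, fun w hw => hxin w (h.mem_cut_edges_iff.mpr (Or.inr (Or.inl ⟨hw, hxb⟩)))⟩
    by_cases hxa : x = a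
    · subst hxa
      -- in `DW` the `W`-vertex `x` only points to `b`, so in the cut it only points to `d`
      have hout : ∀ y, (x, y) ∈ (cut DW DE (x, b) (c, d)).edges → y = d := by
        intro y hy
        rcases h.mem_cut_edges_iff.mp hy with ⟨-, rfl⟩ | ⟨hy, hyb⟩ | ⟨hy, -⟩
        · rfl
        · exact absurd ((weFunctional_iff.mp hW).1 x hxW' b y h.funcEEdge.1.1 hy) hyb
        · exact absurd (h.orientedE.1 _ hy).1 (h.notMem_E_of_mem_W hxW)
      rw [hout y hy, hout z hz]
    · have hne : ∀ {y}, (x, y) ≠ (a, d) := fun hxy => hxa (Prod.mk.inj hxy).1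
      exact (weFunctional_iff.mp hW).1 x hxW' y z (h.mem_W_of_mem_cut hy hne (Or.inl hxW))
        (h.mem_W_of_mem_cut hz hne (Or.inl hxW))
  · have hxd : x ≠ d := by
      rintro rfl
      exact hxin a (h.mem_cut_edges_iff.mpr (Or.inl ⟨rfl, rfl⟩))
    have hxE' : DE.isWVert x := by
      refine ⟨hxE, fun w hw => hxin w (h.mem_cut_edges_iff.mpr (Or.inr (Or.inr ⟨hw, ?_⟩)))⟩
      rintro rfl
      exact hxd (h.funcWEdge.2 x hw)
    have hne : ∀ {y}, (x, y) ≠ (a, d) := fun hxy =>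
      h.notMem_E_of_mem_W h.a_mem ((Prod.mk.inj hxy).1 ▸ hxE)
    exact (weFunctional_iff.mp hE).1 x hxE' y z (h.mem_E_of_mem_cut hy hne (Or.inl hxE))
      (h.mem_E_of_mem_cut hz hne (Or.inl hxE))

theorem in_eq_of_isEVert_cut (h : Cuttable DW DE a b c d) (hW : DW.WEFunctional)
    (hE : DE.WEFunctional) {x y z : ℕ} (hx : (cut DW DE (a, b) (c, d)).isEVert x)
    (hy : (y, x) ∈ (cut DW DE (a, b) (c, d)).edges)
    (hz : (z, x) ∈ (cut DW DE (a, b) (c, d)).edges) : z = y := by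
  obtain ⟨hx, hxout⟩ := hx
  rcases h.mem_cut_verts_iff.mp hx with ⟨hxW, hxb⟩ | ⟨hxE, hxc⟩
  · have hxa : x ≠ a := by
      rintro rfl
      exact hxout d (h.mem_cut_edges_iff.mpr (Or.inl ⟨rfl, rfl⟩))
    have hxW' : DW.isEVert x := by
      refine ⟨hxW, fun w hw => hxout w (h.mem_cut_edges_iff.mpr (Or.inr (Or.inl ⟨hw, ?_⟩)))⟩
      rintro rfl
      exact hxa (h.funcEEdge.2 x hw)
    have hne : ∀ {y}, (y, x) ≠ (a, d) := fun hxy =>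
      h.notMem_E_of_mem_W hxW ((Prod.mk.inj hxy).2 ▸ h.d_mem)
    exact (weFunctional_iff.mp hW).2 x hxW' y z (h.mem_W_of_mem_cut hy hne (Or.inr hxW))
      (h.mem_W_of_mem_cut hz hne (Or.inr hxW))
  · have hxE' : DE.isEVert x :=
      ⟨hxE, fun w hw => hxout w (h.mem_cut_edges_iff.mpr (Or.inr (Or.inr ⟨hw, hxc⟩)))⟩
    by_cases hxd : x = d
    · subst hxd
      -- in `DE` the `E`-vertex `x` is only reached from `c`, so in the cut only from `a`
      have hin : ∀ y, (y, x) ∈ (cut DW DE (a, b) (c, x)).edges → y = a := by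
        intro y hy
        rcases h.mem_cut_edges_iff.mp hy with ⟨rfl, -⟩ | ⟨hy, -⟩ | ⟨hy, hyc⟩
        · rfl
        · exact absurd (h.orientedW.1 _ hy).2 (fun hxW => h.notMem_E_of_mem_W hxW hxE)
        · exact absurd ((weFunctional_iff.mp hE).2 x hxE' c y h.funcWEdge.1.1 hy) hyc
      rw [hin y hy, hin z hz]
    · have hne : ∀ {y}, (y, x) ≠ (a, d) := fun hxy => hxd (Prod.mk.inj hxy).2
      exact (weFunctional_iff.mp hE).2 x hxE' y z (h.mem_E_of_mem_cut hy hne (Or.inr hxE))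
        (h.mem_E_of_mem_cut hz hne (Or.inr hxE))

theorem weFunctional_cut (h : Cuttable DW DE a b c d) (hW : DW.WEFunctional)
    (hE : DE.WEFunctional) : (cut DW DE (a, b) (c, d)).WEFunctional :=
  weFunctional_iff.mpr ⟨fun _ hx _ _ => h.out_eq_of_isWVert_cut hW hE hx,
    fun _ hx _ _ => h.in_eq_of_isEVert_cut hW hE hx⟩

theorem exists_isInner_cut (h : Cuttable DW DE a b c d) (hW : ∃ v, DW.isInner v) :
    ∃ v, (cut DW DE (a, b) (c, d)).isInner v := by
  obtain ⟨v, hv, ⟨p, hp⟩, ⟨q, hq⟩⟩ := hW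
  have hvb : v ≠ b := by
    rintro rfl
    exact h.funcEEdge.1.2.2 q hq
  refine ⟨v, h.mem_cut_verts_iff.mpr (Or.inl ⟨hv, hvb⟩),
    ⟨p, h.mem_cut_edges_iff.mpr (Or.inr (Or.inl ⟨hp, hvb⟩))⟩, ?_⟩
  by_cases hqb : q = b
  · exact ⟨d, h.mem_cut_edges_iff.mpr (Or.inl ⟨h.funcEEdge.2 v (hqb ▸ hq), rfl⟩)⟩
  · exact ⟨q, h.mem_cut_edges_iff.mpr (Or.inr (Or.inl ⟨hq, hqb⟩))⟩

end Cuttable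

end DG

theorem IsBasicK.isQGraph {D : DG} {ε : DistE} (h : IsBasicK D ε) : IsQGraph D := by
  obtain ⟨hD, b, hb, hstar, hjoin, hin, hout, -⟩ := h
  refine ⟨hD, DG.weaklyConnected_of_reflTransGen hD (a := b) fun v hv => ?_,
    DG.asemicyclic_of_forall_edge hD hstar, DG.weFunctional_of_forall_edge hstar hin hout,
    b, hb, hin, hout⟩
  rcases hjoin v hv with rfl | h | h
  exacts [.refl, .single (Or.inr h), .single (Or.inl h)]

theorem IsQGraph.cut {DW DE : DG} {a b c d : ℕ} (hW : IsQGraph DW) (hE : IsQGraph DE)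
    (hdisj : Disjoint DW.verts DE.verts) (heW : DW.funcEEdge (a, b))
    (heE : DE.funcWEdge (c, d)) : IsQGraph (DG.cut DW DE (a, b) (c, d)) := by
  have h : DW.Cuttable DE a b c d := ⟨hW.1, hE.1, hdisj, heW, heE⟩
  exact ⟨h.isOriented_cut, h.weaklyConnected_cut hW.2.1 hE.2.1,
    h.asemicyclic_cut hW.2.2.1 hE.2.2.1, h.weFunctional_cut hW.2.2.2.1 hE.2.2.2.1,
    h.exists_isInner_cut hW.2.2.2.2⟩

/-- Every global K-graph is a weakly connected, asemicyclic and
`W`-`E`-functional oriented graph that has an inner vertex. -/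
theorem global_K_graph_properties (G : CTree) (hG : IsConstruction G) :
    G.rootGraph.IsOriented ∧ G.rootGraph.WeaklyConnected ∧
    G.rootGraph.Asemicyclic ∧ G.rootGraph.WEFunctional ∧
    ∃ a, G.rootGraph.isInner a := by
  show IsQGraph G.rootGraph
  induction hG with
  | leaf D ε h => exact h.isQGraph
  | node D ε eW eE GW GE _ _ hdisj heW heE hD _ _ _ ihW ihE =>
    obtain ⟨a, b⟩ := eW
    obtain ⟨c, d⟩ := eE
    subst hD
    exact ihW.cut ihE hdisj heW heE

end PluralCuts
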